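/- arXiv:1909.09982 — 4 statements merged into one kernel-verified Lean document; each statement's English description precedes it below -/
import Mathlib

section
/- Let E, F, G be real Banach spaces, x₀ ∈ E, R > 0 and L ≥ 0. Let T : E × F → G be a map such that T(x,·) : F → G is linear for every x, and such that for all x, y in the open ball B_R(x₀) of E and all v, w ∈ F with ‖v‖ < R and ‖w‖ < R one has ‖T(x,v) − T(y,w)‖ ≤ L · max(‖x−y‖, ‖v−w‖). Then for all x, y ∈ B_R(x₀) and ALL v ∈ F one has ‖T(x,v) − T(y,v)‖ ≤ (2L/R) · ‖v‖ · ‖x−y‖. -/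
open Metric

theorem LinearMap.norm_apply_le_of_sphere_bound {𝕜 F G : Type*} [RCLike 𝕜]
    [NormedAddCommGroup F] [NormedSpace 𝕜 F] [SeminormedAddCommGroup G] [NormedSpace 𝕜 G]
    {r c : ℝ} (hr : 0 < r) (f : F →ₗ[𝕜] G) (h : ∀ z ∈ sphere (0 : F) r, ‖f z‖ ≤ c) (z : F) :
    ‖f z‖ ≤ c / r * ‖z‖ := by
  rcases eq_or_ne z 0 with rfl | hz
  · simp
  have hz₁ : ((r : 𝕜) * (‖z‖ : 𝕜)⁻¹) • z ∈ sphere (0 : F) r :=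
    mem_sphere_zero_iff_norm.mpr (norm_smul_inv_norm' hr.le hz)
  have hfz : f z = ((‖z‖ / r : ℝ) : 𝕜) • f (((r : 𝕜) * (‖z‖ : 𝕜)⁻¹) • z) := by
    have : (r : 𝕜) ≠ 0 := RCLike.ofReal_ne_zero.mpr hr.ne'
    have : (‖z‖ : 𝕜) ≠ 0 := RCLike.ofReal_ne_zero.mpr (norm_ne_zero_iff.mpr hz)
    rw [map_smul, smul_smul, RCLike.ofReal_div]
    field_simp
    rw [one_smul]
  calc ‖f z‖ = ‖z‖ / r * ‖f (((r : 𝕜) * (‖z‖ : 𝕜)⁻¹) • z)‖ := by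
        rw [hfz, norm_smul, RCLike.norm_ofReal, abs_of_nonneg (by positivity)]
    _ ≤ ‖z‖ / r * c := by gcongr; exact h _ hz₁
    _ = c / r * ‖z‖ := by ring

theorem lipschitz_rescaling_of_linear_second_general
    {E F G : Type*}
    [NormedAddCommGroup E] [NormedSpace ℝ E]
    [NormedAddCommGroup F] [NormedSpace ℝ F]
    [NormedAddCommGroup G] [NormedSpace ℝ G]
    (x₀ : E) (R L : ℝ) (hR : 0 < R)
    (T : E → F → G) (hlin : ∀ x : E, IsLinearMap ℝ (T x))
    (hbound : ∀ x ∈ ball x₀ R, ∀ y ∈ ball x₀ R, ∀ v w : F, ‖v‖ < R → ‖w‖ < R →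
      ‖T x v - T y w‖ ≤ L * max ‖x - y‖ ‖v - w‖) :
    ∀ x ∈ ball x₀ R, ∀ y ∈ ball x₀ R, ∀ v : F,
      ‖T x v - T y v‖ ≤ (2 * L / R) * ‖v‖ * ‖x - y‖ := by
  intro x hx y hy v
  have hsphere : ∀ z ∈ sphere (0 : F) (R / 2),
      ‖((hlin x).mk' (T x) - (hlin y).mk' (T y)) z‖ ≤ L * ‖x - y‖ := by
    intro z hz
    have hzR : ‖z‖ < R := by rw [mem_sphere_zero_iff_norm.mp hz]; linarith
    simpa using hbound x hx y hy z z hzR hzR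
  calc ‖T x v - T y v‖ ≤ L * ‖x - y‖ / (R / 2) * ‖v‖ :=
        LinearMap.norm_apply_le_of_sphere_bound (half_pos hR) _ hsphere v
    _ = 2 * L / R * ‖v‖ * ‖x - y‖ := by field_simp

/-- **Rescaling estimate for maps linear in the second variable.**
If `T : E × F → G` is linear in its second argument and satisfies a Lipschitz-type bound
`‖T x v - T y w‖ ≤ L * max ‖x - y‖ ‖v - w‖` for `x, y` in the ball `B_R(x₀)` and `‖v‖, ‖w‖ < R`,
then for all `x, y ∈ B_R(x₀)` and *all* `v ∈ F` one has
`‖T x v - T y v‖ ≤ (2L/R) * ‖v‖ * ‖x - y‖`. -/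
theorem lipschitz_rescaling_of_linear_second
    {E F G : Type*}
    [NormedAddCommGroup E] [NormedSpace ℝ E]
    [NormedAddCommGroup F] [NormedSpace ℝ F]
    [NormedAddCommGroup G] [NormedSpace ℝ G]
    (x₀ : E) (R L : ℝ) (hR : 0 < R) (hL : 0 ≤ L)
    (T : E → F → G) (hlin : ∀ x : E, IsLinearMap ℝ (T x))
    (hbound : ∀ x ∈ ball x₀ R, ∀ y ∈ ball x₀ R, ∀ v w : F, ‖v‖ < R → ‖w‖ < R →
      ‖T x v - T y w‖ ≤ L * max ‖x - y‖ ‖v - w‖) :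
    ∀ x ∈ ball x₀ R, ∀ y ∈ ball x₀ R, ∀ v : F,
      ‖T x v - T y v‖ ≤ (2 * L / R) * ‖v‖ * ‖x - y‖ :=
  lipschitz_rescaling_of_linear_second_general x₀ R L hR T hlin hbound
end

section
/- Let E and H be separable real Hilbert spaces, let (e_k)_{k∈ℕ} be a Hilbert basis of E, and let (λ_k)_{k∈ℕ} be nonnegative real numbers with ∑_k λ_k < ∞. Let U ⊆ H, let σ : H → L(E,H) be Fréchet differentiable on a neighbourhood of U with derivative σ′ : H → L(H,L(E,H)), and suppose there are constants M, M′, L, L′ ≥ 0 such that for all x, y ∈ U: ‖σ(x)‖_{op} ≤ M, ‖σ′(x)‖_{op} ≤ M′, ‖σ(x) − σ(y)‖_{op} ≤ L‖x−y‖, and ‖σ′(x) − σ′(y)‖_{op} ≤ L′‖x−y‖. Then the map T : U → H, T(x) = ∑_k λ_k · (σ′(x)(σ(x) e_k))(e_k), is well defined and satisfies, for all x, y ∈ U: ‖T(x) − T(y)‖ ≤ (L′·M + M′·L) · (∑_k λ_k) · ‖x−y‖. -/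
/-!
Write `Φ(B, S) = ∑ₖ λₖ B (S eₖ) eₖ`, so that the correction term is `T x = Φ(σ' x, σ x)`.
`Φ` is bilinear with `‖Φ(B, S)‖ ≤ ‖B‖ ‖S‖ ∑ₖ λₖ`, and the splitting
`Φ(B₁, S₁) - Φ(B₂, S₂) = Φ(B₁ - B₂, S₁) + Φ(B₂, S₁ - S₂)` bounds `‖T x - T y‖` by
`(‖σ' x - σ' y‖ ‖σ x‖ + ‖σ' y‖ ‖σ x - σ y‖) ∑ₖ λₖ`.
-/

section WeightedTrace

variable {ι E F G : Type*}
  [NormedAddCommGroup E] [NormedSpace ℝ E]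
  [NormedAddCommGroup F] [NormedSpace ℝ F]
  [NormedAddCommGroup G] [NormedSpace ℝ G]

/-- `tr[B S Q]` for the covariance `Q = ∑ₖ λₖ vₖ ⊗ vₖ`. -/
noncomputable def weightedTrace (lam : ι → ℝ) (v : ι → E)
    (B : F →L[ℝ] E →L[ℝ] G) (S : E →L[ℝ] F) : G :=
  ∑' k, lam k • B (S (v k)) (v k)

lemma ContinuousLinearMap.norm_apply_apply_le_of_norm_le_one (B : F →L[ℝ] E →L[ℝ] G) {u : E}
    (hu : ‖u‖ ≤ 1) (S : E →L[ℝ] F) :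
    ‖B (S u) u‖ ≤ ‖B‖ * ‖S‖ :=
  calc ‖B (S u) u‖ ≤ ‖B‖ * ‖S u‖ * ‖u‖ := B.le_opNorm₂ _ _
    _ ≤ ‖B‖ * (‖S‖ * ‖u‖) * ‖u‖ := by gcongr; exact S.le_opNorm u
    _ = ‖B‖ * ‖S‖ * (‖u‖ * ‖u‖) := by ring
    _ ≤ ‖B‖ * ‖S‖ * 1 := by gcongr; exact mul_le_one₀ hu (norm_nonneg u) hu
    _ = ‖B‖ * ‖S‖ := mul_one _

variable {lam : ι → ℝ} {v : ι → E}

lemma norm_weightedTrace_term_le (hlam : ∀ k, 0 ≤ lam k) (hv : ∀ k, ‖v k‖ ≤ 1)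
    (B : F →L[ℝ] E →L[ℝ] G) (S : E →L[ℝ] F) (k : ι) :
    ‖lam k • B (S (v k)) (v k)‖ ≤ lam k * (‖B‖ * ‖S‖) := by
  rw [norm_smul, Real.norm_of_nonneg (hlam k)]
  exact mul_le_mul_of_nonneg_left (B.norm_apply_apply_le_of_norm_le_one (hv k) S) (hlam k)

lemma summable_weightedTrace_term [CompleteSpace G] (hlam : ∀ k, 0 ≤ lam k)
    (hsum : Summable lam) (hv : ∀ k, ‖v k‖ ≤ 1) (B : F →L[ℝ] E →L[ℝ] G) (S : E →L[ℝ] F) :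
    Summable fun k => lam k • B (S (v k)) (v k) :=
  .of_norm_bounded (hsum.mul_right _) (norm_weightedTrace_term_le hlam hv B S)

lemma norm_weightedTrace_le (hlam : ∀ k, 0 ≤ lam k) (hsum : Summable lam)
    (hv : ∀ k, ‖v k‖ ≤ 1) (B : F →L[ℝ] E →L[ℝ] G) (S : E →L[ℝ] F) :
    ‖weightedTrace lam v B S‖ ≤ ‖B‖ * ‖S‖ * ∑' k, lam k := by
  rw [mul_comm, ← tsum_mul_right]
  exact tsum_of_norm_bounded (hsum.mul_right _).hasSum (norm_weightedTrace_term_le hlam hv B S)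

lemma weightedTrace_sub_weightedTrace [CompleteSpace G] (hlam : ∀ k, 0 ≤ lam k)
    (hsum : Summable lam) (hv : ∀ k, ‖v k‖ ≤ 1) (B₁ B₂ : F →L[ℝ] E →L[ℝ] G)
    (S₁ S₂ : E →L[ℝ] F) :
    weightedTrace lam v B₁ S₁ - weightedTrace lam v B₂ S₂ =
      weightedTrace lam v (B₁ - B₂) S₁ + weightedTrace lam v B₂ (S₁ - S₂) := by
  have hs := summable_weightedTrace_term hlam hsum hv (F := F) (G := G)
  unfold weightedTrace
  rw [← (hs B₁ S₁).tsum_sub (hs B₂ S₂), ← (hs _ _).tsum_add (hs _ _)]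
  congr 1 with k
  simp only [sub_apply, map_sub, smul_sub]
  abel

lemma norm_weightedTrace_sub_le [CompleteSpace G] (hlam : ∀ k, 0 ≤ lam k)
    (hsum : Summable lam) (hv : ∀ k, ‖v k‖ ≤ 1) (B₁ B₂ : F →L[ℝ] E →L[ℝ] G)
    (S₁ S₂ : E →L[ℝ] F) :
    ‖weightedTrace lam v B₁ S₁ - weightedTrace lam v B₂ S₂‖ ≤
      (‖B₁ - B₂‖ * ‖S₁‖ + ‖B₂‖ * ‖S₁ - S₂‖) * ∑' k, lam k := by
  rw [weightedTrace_sub_weightedTrace hlam hsum hv, add_mul]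
  exact (norm_add_le _ _).trans (add_le_add (norm_weightedTrace_le hlam hsum hv _ _)
    (norm_weightedTrace_le hlam hsum hv _ _))

end WeightedTrace

theorem stratonovichCorrection_lipschitz_general
    {E H : Type*}
    [NormedAddCommGroup E] [InnerProductSpace ℝ E]
    [NormedAddCommGroup H] [InnerProductSpace ℝ H] [CompleteSpace H]
    (e : HilbertBasis ℕ ℝ E) (lam : ℕ → ℝ) (hlam : ∀ k, 0 ≤ lam k)
    (hsum : Summable lam)
    (U : Set H)
    (σ : H → (E →L[ℝ] H)) (σ' : H → (H →L[ℝ] (E →L[ℝ] H)))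
    (M M' L L' : ℝ)
    (hbddσ : ∀ x ∈ U, ‖σ x‖ ≤ M)
    (hbddσ' : ∀ x ∈ U, ‖σ' x‖ ≤ M')
    (hlipσ : ∀ x ∈ U, ∀ y ∈ U, ‖σ x - σ y‖ ≤ L * ‖x - y‖)
    (hlipσ' : ∀ x ∈ U, ∀ y ∈ U, ‖σ' x - σ' y‖ ≤ L' * ‖x - y‖) :
    (∀ x ∈ U, Summable (fun k => lam k • ((σ' x) ((σ x) (e k))) (e k))) ∧
      ∀ x ∈ U, ∀ y ∈ U,
        ‖(∑' k, lam k • ((σ' x) ((σ x) (e k))) (e k)) -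
            (∑' k, lam k • ((σ' y) ((σ y) (e k))) (e k))‖ ≤
          (L' * M + M' * L) * (∑' k, lam k) * ‖x - y‖ := by
  have he : ∀ k, ‖e k‖ ≤ 1 := fun k => (e.orthonormal.1 k).le
  refine ⟨fun x _ => summable_weightedTrace_term hlam hsum he _ _, fun x hx y hy => ?_⟩
  refine (norm_weightedTrace_sub_le hlam hsum he _ _ _ _).trans ?_
  have hσ'_sub : ‖σ' x - σ' y‖ ≤ L' * ‖x - y‖ := hlipσ' x hx y hy
  have hσ'_y : ‖σ' y‖ ≤ M' := hbddσ' y hy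
  calc (‖σ' x - σ' y‖ * ‖σ x‖ + ‖σ' y‖ * ‖σ x - σ y‖) * ∑' k, lam k
      ≤ (L' * ‖x - y‖ * M + M' * (L * ‖x - y‖)) * ∑' k, lam k := by
        refine mul_le_mul_of_nonneg_right (add_le_add ?_ ?_) (tsum_nonneg hlam)
        · exact mul_le_mul hσ'_sub (hbddσ x hx) (norm_nonneg _)
            ((norm_nonneg (σ' x - σ' y)).trans hσ'_sub)
        · exact mul_le_mul hσ'_y (hlipσ x hx y hy) (norm_nonneg _)
            ((norm_nonneg (σ' y)).trans hσ'_y)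
    _ = (L' * M + M' * L) * (∑' k, lam k) * ‖x - y‖ := by ring

/-- **Lipschitz estimate for the Itô–Stratonovich correction `tr[σ′(x)σ(x)Q]`.**
Let `(e k)` be a Hilbert basis of `E` and `(λ k)` nonnegative summable weights (eigenvalues of a
trace-class covariance operator `Q`).  If `σ : H → L(E,H)` is Fréchet differentiable on an open
neighbourhood `V` of `U` with derivative `σ'` and on `U` both `σ` and `σ'` are bounded
(by `M`, `M'`) and Lipschitz (with constants `L`, `L'`) in operator norm, then the correction
term `T x = ∑ k, λ k • ((σ' x) ((σ x) (e k))) (e k)` is well defined on `U` and satisfies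
`‖T x - T y‖ ≤ (L'·M + M'·L) · (∑ k, λ k) · ‖x - y‖` for all `x, y ∈ U`. -/
theorem stratonovichCorrection_lipschitz
    {E H : Type*}
    [NormedAddCommGroup E] [InnerProductSpace ℝ E] [CompleteSpace E]
    [TopologicalSpace.SeparableSpace E]
    [NormedAddCommGroup H] [InnerProductSpace ℝ H] [CompleteSpace H]
    [TopologicalSpace.SeparableSpace H]
    (e : HilbertBasis ℕ ℝ E) (lam : ℕ → ℝ) (hlam : ∀ k, 0 ≤ lam k)
    (hsum : Summable lam)
    (U V : Set H) (hUV : U ⊆ V) (hV : IsOpen V)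
    (σ : H → (E →L[ℝ] H)) (σ' : H → (H →L[ℝ] (E →L[ℝ] H)))
    (hderiv : ∀ x ∈ V, HasFDerivAt σ (σ' x) x)
    (M M' L L' : ℝ) (hM : 0 ≤ M) (hM' : 0 ≤ M') (hL : 0 ≤ L) (hL' : 0 ≤ L')
    (hbddσ : ∀ x ∈ U, ‖σ x‖ ≤ M)
    (hbddσ' : ∀ x ∈ U, ‖σ' x‖ ≤ M')
    (hlipσ : ∀ x ∈ U, ∀ y ∈ U, ‖σ x - σ y‖ ≤ L * ‖x - y‖)
    (hlipσ' : ∀ x ∈ U, ∀ y ∈ U, ‖σ' x - σ' y‖ ≤ L' * ‖x - y‖) :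
    (∀ x ∈ U, Summable (fun k => lam k • ((σ' x) ((σ x) (e k))) (e k))) ∧
      ∀ x ∈ U, ∀ y ∈ U,
        ‖(∑' k, lam k • ((σ' x) ((σ x) (e k))) (e k)) -
            (∑' k, lam k • ((σ' y) ((σ y) (e k))) (e k))‖ ≤
          (L' * M + M' * L) * (∑' k, lam k) * ‖x - y‖ :=
  stratonovichCorrection_lipschitz_general e lam hlam hsum U σ σ' M M' L L' hbddσ hbddσ' hlipσ
    hlipσ'
end

section
/- Let E, H, H̃ be separable real Hilbert spaces, let (e_k)_{k∈ℕ} be a Hilbert basis of E, and let (λ_k)_{k∈ℕ} be nonnegative real numbers with ∑_k λ_k < ∞. Let f : H → H̃ be twice continuously Fréchet differentiable and σ : H → L(E,H) continuously Fréchet differentiable, and set G(x) = Df(x) ∘ σ(x) ∈ L(E,H̃). Then for every x ∈ H the three families k ↦ λ_k (DG(x)(σ(x)e_k))(e_k), k ↦ λ_k (σ′(x)(σ(x)e_k))(e_k), and k ↦ λ_k (D²f(x)(σ(x)e_k))(σ(x)e_k) are summable, and ∑_k λ_k (DG(x)(σ(x)e_k))(e_k) = Df(x)( ∑_k λ_k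 (σ′(x)(σ(x)e_k))(e_k) ) + ∑_k λ_k (D²f(x)(σ(x)e_k))(σ(x)e_k), as an identity in H̃. -/
/-!
The product rule for composition of operator-valued maps gives
`DG(x) v = Df(x) ∘ σ′(x) v + D²f(x) v ∘ σ(x)`; at `v = σ(x) e_k`, applied to `e_k`, this splits each
term of the left-hand series into the corresponding terms on the right. Each series is a fixed
continuous bilinear map evaluated at vectors of norm at most `‖σ(x)‖` or `1`, weighted by `λ_k`,
and a real series that converges unconditionally converges absolutely, so all three series converge
absolutely; hence they split and commute with `Df(x)`.
-/

theorem fderiv_clm_comp_apply_apply {𝕜 E F G H' : Type*} [NontriviallyNormedField 𝕜]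
    [NormedAddCommGroup E] [NormedSpace 𝕜 E] [NormedAddCommGroup F] [NormedSpace 𝕜 F]
    [NormedAddCommGroup G] [NormedSpace 𝕜 G] [NormedAddCommGroup H'] [NormedSpace 𝕜 H']
    {c : E → G →L[𝕜] H'} {d : E → F →L[𝕜] G} {x : E}
    (hc : DifferentiableAt 𝕜 c x) (hd : DifferentiableAt 𝕜 d x) (v : E) (w : F) :
    fderiv 𝕜 (fun y => (c y).comp (d y)) x v w =
      c x (fderiv 𝕜 d x v w) + fderiv 𝕜 c x v (d x w) := by
  rw [fderiv_clm_comp hc hd]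
  rfl

theorem summable_smul_apply_apply_of_norm_le {ι F G K : Type*}
    [NormedAddCommGroup F] [NormedSpace ℝ F] [NormedAddCommGroup G] [NormedSpace ℝ G]
    [NormedAddCommGroup K] [NormedSpace ℝ K] [CompleteSpace K]
    (B : F →L[ℝ] G →L[ℝ] K) {lam : ι → ℝ} (hlam : Summable lam)
    {u : ι → F} {w : ι → G} {C D : ℝ} (hu : ∀ k, ‖u k‖ ≤ C) (hw : ∀ k, ‖w k‖ ≤ D) :
    Summable fun k => lam k • B (u k) (w k) := by
  refine .of_norm_bounded (hlam.abs.mul_right (‖B‖ * C * D)) fun k => ?_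
  have hC : 0 ≤ C := (norm_nonneg _).trans (hu k)
  rw [norm_smul, Real.norm_eq_abs]
  gcongr
  calc ‖B (u k) (w k)‖ ≤ ‖B‖ * ‖u k‖ * ‖w k‖ := B.le_opNorm₂ _ _
    _ ≤ ‖B‖ * C * D := by gcongr; exacts [hu k, hw k]

theorem tsum_map_add_tsum {ι R F K : Type*} [Semiring R]
    [AddCommMonoid F] [TopologicalSpace F] [Module R F]
    [AddCommMonoid K] [TopologicalSpace K] [Module R K] [ContinuousAdd K] [T2Space K]
    (A : F →L[R] K) {a : ι → F} {b : ι → K} (ha : Summable a) (hb : Summable b) :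
    ∑' k, (A (a k) + b k) = A (∑' k, a k) + ∑' k, b k := by
  rw [(ha.mapL A).tsum_add hb, A.map_tsum ha]

theorem trace_identity_ito_stratonovich_general
    {E H H' : Type*}
    [NormedAddCommGroup E] [InnerProductSpace ℝ E]
    [NormedAddCommGroup H] [InnerProductSpace ℝ H] [CompleteSpace H]
    [NormedAddCommGroup H'] [InnerProductSpace ℝ H'] [CompleteSpace H']
    (e : HilbertBasis ℕ ℝ E) (lam : ℕ → ℝ)
    (hsum : Summable lam)
    (f : H → H') (hf : ContDiff ℝ 2 f)
    (σ : H → (E →L[ℝ] H)) (hσ : ContDiff ℝ 1 σ) :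
    ∀ x : H,
      Summable (fun k =>
        lam k • ((fderiv ℝ (fun y : H => (fderiv ℝ f y).comp (σ y)) x)
          ((σ x) (e k))) (e k)) ∧
      Summable (fun k => lam k • ((fderiv ℝ σ x) ((σ x) (e k))) (e k)) ∧
      Summable (fun k =>
        lam k • ((fderiv ℝ (fun y : H => fderiv ℝ f y) x) ((σ x) (e k))) ((σ x) (e k))) ∧
      (∑' k, lam k • ((fderiv ℝ (fun y : H => (fderiv ℝ f y).comp (σ y)) x)
            ((σ x) (e k))) (e k)) =
        (fderiv ℝ f x) (∑' k, lam k • ((fderiv ℝ σ x) ((σ x) (e k))) (e k)) +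
          ∑' k, lam k • ((fderiv ℝ (fun y : H => fderiv ℝ f y) x)
            ((σ x) (e k))) ((σ x) (e k)) := by
  intro x
  have hDf : DifferentiableAt ℝ (fderiv ℝ f) x :=
    (hf.fderiv_right le_rfl).differentiable one_ne_zero x
  have hσx : DifferentiableAt ℝ σ x := hσ.differentiable one_ne_zero x
  have he : ∀ k, ‖e k‖ ≤ 1 := fun k => (e.orthonormal.1 k).le
  have hσe : ∀ k, ‖σ x (e k)‖ ≤ ‖σ x‖ * 1 := fun k => (σ x).le_opNorm_of_le (he k)
  have hsplit : ∀ k, lam k • fderiv ℝ (fun y => (fderiv ℝ f y).comp (σ y)) x (σ x (e k)) (e k) =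
      fderiv ℝ f x (lam k • fderiv ℝ σ x (σ x (e k)) (e k)) +
        lam k • fderiv ℝ (fderiv ℝ f) x (σ x (e k)) (σ x (e k)) := fun k => by
    rw [fderiv_clm_comp_apply_apply hDf hσx, smul_add, map_smul]
  have hσ' := summable_smul_apply_apply_of_norm_le (fderiv ℝ σ x) hsum hσe he
  have hD2f := summable_smul_apply_apply_of_norm_le (fderiv ℝ (fderiv ℝ f) x) hsum hσe hσe
  simp only [hsplit]
  exact ⟨(hσ'.mapL _).add hD2f, hσ', hD2f, tsum_map_add_tsum _ hσ' hD2f⟩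

/-- **The trace identity behind the Itô formula for Stratonovich differentials**
(equation (Ito_form_proof) in the paper):
`tr[D(Df∘σ)(x) σ(x) Q] = Df(x)(tr[σ′(x)σ(x)Q]) + tr[D²f(x)(σ(x)Q^{1/2})(σ(x)Q^{1/2})*]`,
where `(e k)` is a Hilbert basis of `E` and `(λ k)` are the (nonnegative, summable)
eigenvalues of the trace-class covariance operator `Q`. -/
theorem trace_identity_ito_stratonovich
    {E H H' : Type*}
    [NormedAddCommGroup E] [InnerProductSpace ℝ E] [CompleteSpace E]
    [TopologicalSpace.SeparableSpace E]
    [NormedAddCommGroup H] [InnerProductSpace ℝ H] [CompleteSpace H]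
    [TopologicalSpace.SeparableSpace H]
    [NormedAddCommGroup H'] [InnerProductSpace ℝ H'] [CompleteSpace H']
    [TopologicalSpace.SeparableSpace H']
    (e : HilbertBasis ℕ ℝ E) (lam : ℕ → ℝ) (hlam : ∀ k, 0 ≤ lam k)
    (hsum : Summable lam)
    (f : H → H') (hf : ContDiff ℝ 2 f)
    (σ : H → (E →L[ℝ] H)) (hσ : ContDiff ℝ 1 σ) :
    ∀ x : H,
      Summable (fun k =>
        lam k • ((fderiv ℝ (fun y : H => (fderiv ℝ f y).comp (σ y)) x)
          ((σ x) (e k))) (e k)) ∧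
      Summable (fun k => lam k • ((fderiv ℝ σ x) ((σ x) (e k))) (e k)) ∧
      Summable (fun k =>
        lam k • ((fderiv ℝ (fun y : H => fderiv ℝ f y) x) ((σ x) (e k))) ((σ x) (e k))) ∧
      (∑' k, lam k • ((fderiv ℝ (fun y : H => (fderiv ℝ f y).comp (σ y)) x)
            ((σ x) (e k))) (e k)) =
        (fderiv ℝ f x) (∑' k, lam k • ((fderiv ℝ σ x) ((σ x) (e k))) (e k)) +
          ∑' k, lam k • ((fderiv ℝ (fun y : H => fderiv ℝ f y) x)
            ((σ x) (e k))) ((σ x) (e k)) :=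
  trace_identity_ito_stratonovich_general e lam hsum f hf σ hσ
end

section
/- Let (Ω, 𝒜, P) be a probability space, let E be a separable real Hilbert space, let t ≥ 0, let (σ_k)_{k∈ℕ} be a sequence in E with ∑_k ‖σ_k‖² < ∞, and let (X_k)_{k∈ℕ} be independent real-valued random variables each distributed as a centred Gaussian with variance t. Then the sequence of partial sums S_n = ∑_{k<n} σ_k · X_k converges in L²(Ω, P; E) to a limit S, and the limit satisfies E[‖S‖²] = t · ∑_k ‖σ_k‖². -/
/-!
The `L²` classes of `X k • σ k` are pairwise orthogonal in `L²(Ω, P; E)`: the pointwise inner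
product `⟪X j • σ j, X k • σ k⟫` integrates to `E[X j X k] ⟪σ j, σ k⟫`, and independent centred
variables are uncorrelated. Their squared norms are `t ‖σ k‖²`, so the series converges in the
Hilbert space `L²(Ω, P; E)` because an orthogonal series converges as soon as its squared norms
are summable, and Pythagoras' theorem passes to the limit.
-/

open MeasureTheory ProbabilityTheory Filter

section Orthogonal

variable {ι 𝕜 E : Type*} [RCLike 𝕜] [NormedAddCommGroup E] [InnerProductSpace 𝕜 E] {f : ι → E}

theorem orthogonalFamily_span_singleton (hf : Pairwise fun i j => inner 𝕜 (f i) (f j) = 0) :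
    OrthogonalFamily 𝕜 (fun i => ↥(𝕜 ∙ f i)) fun i => (𝕜 ∙ f i).subtypeₗᵢ :=
  orthogonalFamily_iff_pairwise.mpr fun _ _ hij =>
    Submodule.isOrtho_span.mpr fun u hu v hv => by
      rw [Set.mem_singleton_iff.mp hu, Set.mem_singleton_iff.mp hv]
      exact hf hij

theorem summable_of_pairwise_inner_eq_zero [CompleteSpace E]
    (hf : Pairwise fun i j => inner 𝕜 (f i) (f j) = 0) (h : Summable fun i => ‖f i‖ ^ 2) :
    Summable f :=
  ((orthogonalFamily_span_singleton hf).summable_iff_norm_sq_summable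
    fun i => ⟨f i, Submodule.mem_span_singleton_self _⟩).mpr h

theorem HasSum.norm_sq_of_pairwise_inner_eq_zero {S : E} (hS : HasSum f S)
    (hf : Pairwise fun i j => inner 𝕜 (f i) (f j) = 0) :
    HasSum (fun i => ‖f i‖ ^ 2) (‖S‖ ^ 2) := by
  have hpyth (s : Finset ι) : ‖∑ i ∈ s, f i‖ ^ 2 = ∑ i ∈ s, ‖f i‖ ^ 2 :=
    (orthogonalFamily_span_singleton hf).norm_sum
      (fun i => ⟨f i, Submodule.mem_span_singleton_self _⟩) s
  simpa only [HasSum, hpyth] using hS.norm.pow 2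

end Orthogonal

namespace MeasureTheory

variable {Ω E : Type*} [MeasurableSpace Ω] {P : Measure Ω}

theorem Lp.coeFn_finset_sum [NormedAddCommGroup E] {p : ENNReal} {ι : Type*} (s : Finset ι)
    (f : ι → Lp E p P) : ⇑(∑ i ∈ s, f i) =ᵐ[P] ∑ i ∈ s, ⇑(f i) := by
  classical
  induction s using Finset.induction_on with
  | empty => simpa using Lp.coeFn_zero E p P
  | insert i s hi ih =>
    rw [Finset.sum_insert hi, Finset.sum_insert hi]
    exact (Lp.coeFn_add _ _).trans ih.add_left

theorem MemLp.smul_const [NormedAddCommGroup E] [NormedSpace ℝ E] {p : ENNReal} {X : Ω → ℝ}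
    (hX : MemLp X p P) (u : E) : MemLp (fun ω => X ω • u) p P :=
  (ContinuousLinearMap.toSpanSingleton ℝ u).comp_memLp' hX

variable [NormedAddCommGroup E] [InnerProductSpace ℝ E]

theorem L2.norm_sq_eq_integral_norm_sq (f : Lp E 2 P) : ‖f‖ ^ 2 = ∫ ω, ‖f ω‖ ^ 2 ∂P := by
  simp only [← real_inner_self_eq_norm_sq, L2.inner_def]

theorem L2.inner_toLp_smul_const {X Y : Ω → ℝ} (hX : MemLp X 2 P) (hY : MemLp Y 2 P) (u v : E) :
    inner ℝ ((hX.smul_const u).toLp _) ((hY.smul_const v).toLp _)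
      = (∫ ω, X ω * Y ω ∂P) * inner ℝ u v := by
  rw [L2.inner_def, ← integral_mul_const]
  refine integral_congr_ae ?_
  filter_upwards [(hX.smul_const u).coeFn_toLp, (hY.smul_const v).coeFn_toLp] with ω hXω hYω
  rw [hXω, hYω, real_inner_smul_left, real_inner_smul_right]
  ring

theorem L2.norm_toLp_smul_const_sq {X : Ω → ℝ} (hX : MemLp X 2 P) (u : E) :
    ‖(hX.smul_const u).toLp _‖ ^ 2 = (∫ ω, X ω ^ 2 ∂P) * ‖u‖ ^ 2 := by
  rw [← real_inner_self_eq_norm_sq, L2.inner_toLp_smul_const hX hX, real_inner_self_eq_norm_sq]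
  simp only [sq]

theorem L2.integral_norm_sum_smul_sub_sq {X : ℕ → Ω → ℝ} (hX : ∀ k, MemLp (X k) 2 P) (σ : ℕ → E)
    (s : Finset ℕ) (S : Lp E 2 P) :
    ∫ ω, ‖(∑ k ∈ s, X k ω • σ k) - S ω‖ ^ 2 ∂P
      = ‖∑ k ∈ s, ((hX k).smul_const (σ k)).toLp _ - S‖ ^ 2 := by
  rw [L2.norm_sq_eq_integral_norm_sq]
  refine integral_congr_ae ?_
  filter_upwards [Lp.coeFn_sub (∑ k ∈ s, ((hX k).smul_const (σ k)).toLp _) S,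
    Lp.coeFn_finset_sum s fun k => ((hX k).smul_const (σ k)).toLp _,
    ae_all_iff.mpr fun k => ((hX k).smul_const (σ k)).coeFn_toLp] with ω hsub hsum htoLp
  simp only [hsub, Pi.sub_apply, hsum, Finset.sum_apply, htoLp]

theorem exists_L2_limit_sum_smul_of_uncorrelated [CompleteSpace E] {X : ℕ → Ω → ℝ}
    (hX : ∀ k, MemLp (X k) 2 P) (huncorr : Pairwise fun j k => ∫ ω, X j ω * X k ω ∂P = 0)
    (σ : ℕ → E)
    (hσ : Summable fun k => (∫ ω, X k ω ^ 2 ∂P) * ‖σ k‖ ^ 2) :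
    ∃ S : Ω → E, MemLp S 2 P ∧
      Tendsto (fun n => ∫ ω, ‖(∑ k ∈ Finset.range n, X k ω • σ k) - S ω‖ ^ 2 ∂P)
        atTop (nhds 0) ∧
      ∫ ω, ‖S ω‖ ^ 2 ∂P = ∑' k, (∫ ω, X k ω ^ 2 ∂P) * ‖σ k‖ ^ 2 := by
  set F : ℕ → Lp E 2 P := fun k => ((hX k).smul_const (σ k)).toLp _
  have horth : Pairwise fun j k => inner ℝ (F j) (F k) = 0 := fun j k hjk =>
    (L2.inner_toLp_smul_const (hX j) (hX k) _ _).trans (by rw [huncorr hjk, zero_mul])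
  have hnorm (k : ℕ) : ‖F k‖ ^ 2 = (∫ ω, X k ω ^ 2 ∂P) * ‖σ k‖ ^ 2 :=
    L2.norm_toLp_smul_const_sq (hX k) (σ k)
  obtain ⟨S, hS⟩ : Summable F :=
    summable_of_pairwise_inner_eq_zero horth (by simpa only [hnorm] using hσ)
  refine ⟨S, Lp.memLp S, ?_, ?_⟩
  · simp only [L2.integral_norm_sum_smul_sub_sq hX]
    simpa using ((hS.tendsto_sum_nat.sub_const S).norm.pow 2)
  · rw [← L2.norm_sq_eq_integral_norm_sq, ← (hS.norm_sq_of_pairwise_inner_eq_zero horth).tsum_eq]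
    simp only [hnorm]

end MeasureTheory

namespace ProbabilityTheory

variable {Ω : Type*} [MeasurableSpace Ω] {P : Measure Ω} {X : Ω → ℝ} {v : NNReal}

theorem HasLaw.memLp_of_gaussianReal {μ : ℝ} (hX : HasLaw X (gaussianReal μ v) P) (p : NNReal) :
    MemLp X p P := by
  have h := memLp_id_gaussianReal (μ := μ) (v := v) p
  rw [← hX.map_eq, memLp_map_measure_iff aestronglyMeasurable_id hX.aemeasurable] at h
  exact h

theorem HasLaw.integral_sq_of_gaussianReal_zero (hX : HasLaw X (gaussianReal 0 v) P) :
    ∫ ω, X ω ^ 2 ∂P = v := by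
  have hmean : P[X] = 0 := hX.integral_eq.trans integral_id_gaussianReal
  rw [← variance_of_integral_eq_zero hX.aemeasurable hmean, hX.variance_eq,
    variance_id_gaussianReal]

end ProbabilityTheory

theorem traceClass_brownian_series_converges_general
    {Ω : Type*} [MeasurableSpace Ω] (P : Measure Ω)
    {E : Type*} [NormedAddCommGroup E] [InnerProductSpace ℝ E] [CompleteSpace E]
    (t : ℝ) (ht : 0 ≤ t)
    (σ : ℕ → E) (hσ : Summable (fun k => ‖σ k‖ ^ 2))
    (X : ℕ → Ω → ℝ) (hmeas : ∀ k, Measurable (X k))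
    (hindep : iIndepFun X P)
    (hgauss : ∀ k, Measure.map (X k) P = gaussianReal 0 t.toNNReal) :
    ∃ S : Ω → E, MemLp S 2 P ∧
      Tendsto (fun n => ∫ ω, ‖(∑ k ∈ Finset.range n, X k ω • σ k) - S ω‖ ^ 2 ∂P)
        atTop (nhds 0) ∧
      ∫ ω, ‖S ω‖ ^ 2 ∂P = t * ∑' k, ‖σ k‖ ^ 2 := by
  have hlaw (k : ℕ) : HasLaw (X k) (gaussianReal 0 t.toNNReal) P :=
    ⟨(hmeas k).aemeasurable, hgauss k⟩
  have hX2 (k : ℕ) : MemLp (X k) 2 P := (hlaw k).memLp_of_gaussianReal 2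
  have hsq (k : ℕ) : ∫ ω, X k ω ^ 2 ∂P = t := by
    rw [(hlaw k).integral_sq_of_gaussianReal_zero, Real.coe_toNNReal t ht]
  have huncorr : Pairwise fun j k => ∫ ω, X j ω * X k ω ∂P = 0 := fun j k hjk => by
    dsimp only
    rw [(hindep.indepFun hjk).integral_fun_mul_eq_mul_integral (hmeas j).aestronglyMeasurable
      (hmeas k).aestronglyMeasurable, (hlaw j).integral_eq, integral_id_gaussianReal, zero_mul]
  obtain ⟨S, hS, hlim, hnorm⟩ := exists_L2_limit_sum_smul_of_uncorrelated hX2 huncorr σ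
    (by simpa only [hsq] using hσ.mul_left t)
  exact ⟨S, hS, hlim, by simpa only [hsq, tsum_mul_left] using hnorm⟩

/-- **Convergence of the trace-class Brownian motion series at a fixed time.**
Let `(σ k)` be a sequence in a separable real Hilbert space `E` with `∑ k, ‖σ k‖² < ∞`, let
`t ≥ 0`, and let `(X k)` be independent real random variables, each Gaussian `N(0, t)`.
Then the partial sums `S_n = ∑_{k<n} X k • σ k` converge in `L²(Ω, P; E)` to a limit `S`
satisfying `E[‖S‖²] = t * ∑ k, ‖σ k‖²`. -/
theorem traceClass_brownian_series_converges
    {Ω : Type*} [MeasurableSpace Ω] (P : Measure Ω) [IsProbabilityMeasure P]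
    {E : Type*} [NormedAddCommGroup E] [InnerProductSpace ℝ E] [CompleteSpace E]
    [TopologicalSpace.SeparableSpace E]
    (t : ℝ) (ht : 0 ≤ t)
    (σ : ℕ → E) (hσ : Summable (fun k => ‖σ k‖ ^ 2))
    (X : ℕ → Ω → ℝ) (hmeas : ∀ k, Measurable (X k))
    (hindep : iIndepFun X P)
    (hgauss : ∀ k, Measure.map (X k) P = gaussianReal 0 t.toNNReal) :
    ∃ S : Ω → E, MemLp S 2 P ∧
      Tendsto (fun n => ∫ ω, ‖(∑ k ∈ Finset.range n, X k ω • σ k) - S ω‖ ^ 2 ∂P)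
        atTop (nhds 0) ∧
      ∫ ω, ‖S ω‖ ^ 2 ∂P = t * ∑' k, ‖σ k‖ ^ 2 :=
  traceClass_brownian_series_converges_general P t ht σ hσ X hmeas hindep hgauss
end
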